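/- In a pointed regular category, an intersection of two ideals is an ideal: if i : I → Y and l : L → Y are ideals, then the subobject I∩L → Y obtained as the pullback of i and l is an ideal. -/

import Mathlib

open CategoryTheory CategoryTheory.Limits

universe v u

variable {C : Type u} [Category.{v} C]

/-- `i : I ⟶ Y` is a zero-class of the span `(d : R ⟶ X, c : R ⟶ Y)`:
it fits in a pullback of `⟨d,c⟩` along `⟨0, 1_Y⟩`. -/
def IsZeroClass [HasZeroMorphisms C] [HasBinaryProducts C]
    {R X Y I : C} (d : R ⟶ X) (c : R ⟶ Y) (i : I ⟶ Y) : Prop :=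
  ∃ l : I ⟶ R, IsPullback l i (prod.lift d c) (prod.lift (0 : Y ⟶ X) (𝟙 Y))

/-- `k : K ⟶ X` is a clot: a monomorphism which is the zero-class of a reflexive
relation on `X`. -/
def IsClot [HasZeroMorphisms C] [HasBinaryProducts C] {K X : C} (k : K ⟶ X) : Prop :=
  Mono k ∧ ∃ (R : C) (d c : R ⟶ X) (e : X ⟶ R),
    Mono (prod.lift d c) ∧ e ≫ d = 𝟙 X ∧ e ≫ c = 𝟙 X ∧ IsZeroClass d c k

/-- `i : I ⟶ Y` is an ideal: a monomorphism which is the regular image of a clot,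
i.e. there are a clot `k : K ⟶ X` and regular epimorphisms `p : X ⟶ Y`, `q : K ⟶ I`
with `i ∘ q = p ∘ k`. -/
def IsIdeal [HasZeroMorphisms C] [HasBinaryProducts C] {I Y : C} (i : I ⟶ Y) : Prop :=
  Mono i ∧ ∃ (K X : C) (k : K ⟶ X) (p : X ⟶ Y) (q : K ⟶ I),
    IsClot k ∧ Nonempty (RegularEpi p) ∧ Nonempty (RegularEpi q) ∧ q ≫ i = k ≫ p

/-- A regular category: finitely complete, with coequalizers of kernel pairs,
and regular epimorphisms stable under pullback. -/
class RegularCategory (C : Type u) [Category.{v} C] extends HasFiniteLimits C : Prop where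
  hasCoequalizerOfKernelPair : ∀ {X Y : C} (f : X ⟶ Y),
    HasCoequalizer (pullback.fst f f) (pullback.snd f f)
  regularEpiStable : ∀ {P X Y Z : C} (f : X ⟶ Z) (g : Y ⟶ Z) (fst : P ⟶ X) (snd : P ⟶ Y),
    IsPullback fst snd f g → Nonempty (RegularEpi f) → Nonempty (RegularEpi snd)

/-! If `i` is the image of a clot `k : K ⟶ X` under `p : X ⟶ Y` and `l` that of a clot
`k' : K' ⟶ X'` under `p' : X' ⟶ Y`, work over `Z = X ×_Y X'`, which covers `Y` by a regular
epimorphism. The preimages of `K` and `K'` in `Z` are clots, and so is their intersection, which is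
`K ×_Y K'`. Its image in `Y` is `I ∩ L = I ×_Y L`, since `K ×_Y K' ⟶ I ×_Y L` is a composite of
pullbacks of the regular epimorphisms `K ⟶ I` and `K' ⟶ L`. -/

attribute [local simp] prod.lift_fst prod.lift_snd prod.lift_fst_assoc prod.lift_snd_assoc
  pullback.lift_fst pullback.lift_snd pullback.lift_fst_assoc pullback.lift_snd_assoc

instance RegularCategory.regular [RegularCategory C] : Regular C where
  hasCoequalizer_of_isKernelPair {_ _ _ f _ _} h :=
    haveI := RegularCategory.hasCoequalizerOfKernelPair f
    hasColimit_of_iso (F := parallelPair (pullback.fst f f) (pullback.snd f f))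
      (parallelPair.ext h.isoPullback (Iso.refl _))
  regularEpiIsStableUnderBaseChange :=
    ⟨fun sq hg => ⟨RegularCategory.regularEpiStable _ _ _ _ sq hg.regularEpi⟩⟩

theorem CategoryTheory.IsPullback.isRegularEpi_lift [Regular C] {P I L Y M K K' : C}
    {a : P ⟶ I} {b : P ⟶ L} {i : I ⟶ Y} {l : L ⟶ Y} (hP : IsPullback a b i l)
    {u : M ⟶ K} {u' : M ⟶ K'} {q : K ⟶ I} {q' : K' ⟶ L} (hM : IsPullback u u' (q ≫ i) (q' ≫ l))
    [IsRegularEpi q] [IsRegularEpi q'] :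
    IsRegularEpi (hP.lift (u ≫ q) (u' ≫ q') (by simpa using hM.w)) := by
  let t₁ : M ⟶ pullback (q ≫ i) l := pullback.lift u (u' ≫ q') (by simpa using hM.w)
  let t₂ : pullback (q ≫ i) l ⟶ P := hP.lift (pullback.fst _ _ ≫ q) (pullback.snd _ _)
    (by simpa using pullback.condition)
  have h₁ : IsPullback u' t₁ q' (pullback.snd _ _) :=
    .of_bot (by simpa [t₁] using hM.flip) (by simp [t₁]) (IsPullback.of_hasPullback _ _).flip
  have h₂ : IsPullback (pullback.fst _ _) t₂ q a :=
    .of_bot (by simpa [t₂] using IsPullback.of_hasPullback (q ≫ i) l) (by simp [t₂]) hP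
  have : IsRegularEpi t₁ := Regular.regularEpiIsStableUnderBaseChange.of_isPullback h₁ ‹_›
  have : IsRegularEpi t₂ := Regular.regularEpiIsStableUnderBaseChange.of_isPullback h₂ ‹_›
  rw [show hP.lift _ _ _ = t₁ ≫ t₂ from hP.hom_ext (by simp [t₁, t₂]) (by simp [t₁, t₂])]
  infer_instance

section Clots

variable [HasZeroMorphisms C] [HasBinaryProducts C]

theorem isClot_iff {K X : C} (k : K ⟶ X) :
    IsClot k ↔ Mono k ∧ ∃ (R : C) (r : R ⟶ X ⨯ X) (e : X ⟶ R) (w : K ⟶ R),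
      Mono r ∧ e ≫ r = diag X ∧ IsPullback w k r (prod.lift 0 (𝟙 X)) := by
  constructor
  · rintro ⟨hk, R, d, c, e, hdc, hed, hec, w, hw⟩
    exact ⟨hk, R, prod.lift d c, e, w, hdc, by ext <;> simp [hed, hec], hw⟩
  · rintro ⟨hk, R, r, e, w, hr, he, hw⟩
    have hr' : prod.lift (r ≫ prod.fst) (r ≫ prod.snd) = r := by
      rw [← prod.comp_lift, prod.lift_fst_snd, Category.comp_id]
    refine ⟨hk, R, r ≫ prod.fst, r ≫ prod.snd, e, by rwa [hr'], ?_, ?_, w, by rwa [hr']⟩ <;>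
      simp [reassoc_of% he]

variable [HasPullbacks C]

theorem IsClot.of_isPullback {K X K' Z : C} {k : K ⟶ X} (hk : IsClot k)
    {g : K' ⟶ K} {k' : K' ⟶ Z} {f : Z ⟶ X} (h : IsPullback g k' k f) : IsClot k' := by
  obtain ⟨_, R, r, e, w, _, he, hw⟩ := (isClot_iff k).1 hk
  have hsq : f ≫ prod.lift 0 (𝟙 X) = prod.lift 0 (𝟙 Z) ≫ prod.map f f := by ext <;> simp
  refine (isClot_iff k').2 ⟨h.mono_snd_of_mono, pullback r (prod.map f f), pullback.snd _ _,
    pullback.lift (f ≫ e) (diag Z) (by simp [he]), _, inferInstance, by simp,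
    .of_right' (hsq ▸ h.paste_horiz hw) (.of_hasPullback r (prod.map f f))⟩

theorem IsClot.inter {K₁ K₂ M Z : C} {k₁ : K₁ ⟶ Z} {k₂ : K₂ ⟶ Z} (h₁ : IsClot k₁) (h₂ : IsClot k₂)
    {u₁ : M ⟶ K₁} {u₂ : M ⟶ K₂} (h : IsPullback u₁ u₂ k₁ k₂) : IsClot (u₁ ≫ k₁) := by
  obtain ⟨_, R₁, r₁, e₁, w₁, _, he₁, hw₁⟩ := (isClot_iff k₁).1 h₁
  obtain ⟨_, R₂, r₂, e₂, w₂, _, he₂, hw₂⟩ := (isClot_iff k₂).1 h₂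
  have : Mono u₁ := h.mono_fst_of_mono
  have hM : IsPullback (u₂ ≫ w₂) u₁ r₂ (w₁ ≫ r₁) := hw₁.w ▸ h.flip.paste_horiz hw₂
  refine (isClot_iff _).2 ⟨mono_comp _ _, pullback r₁ r₂, pullback.fst _ _ ≫ r₁,
    pullback.lift e₁ e₂ (he₁.trans he₂.symm), _, mono_comp _ _, by simp [he₁],
    (hM.of_right' (IsPullback.of_hasPullback r₁ r₂).flip).paste_vert hw₁⟩

end Clots

theorem isIdeal_intersection_general {C : Type u} [Category.{v} C]
    [HasZeroMorphisms C] [RegularCategory C]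
    {I L Y P : C} (i : I ⟶ Y) (l : L ⟶ Y) (a : P ⟶ I) (b : P ⟶ L)
    (h : IsPullback a b i l) (hi : IsIdeal i) (hl : IsIdeal l) :
    IsIdeal (a ≫ i) := by
  obtain ⟨_, K, X, k, p, q, hk, hp, hq, hkq⟩ := hi
  obtain ⟨_, K', X', k', p', q', hk', hp', hq', hkq'⟩ := hl
  have : IsRegularEpi p := ⟨hp⟩
  have : IsRegularEpi p' := ⟨hp'⟩
  have : IsRegularEpi q := ⟨hq⟩
  have : IsRegularEpi q' := ⟨hq'⟩
  have hZ := IsPullback.of_hasPullback p p'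
  have h₁ := IsPullback.of_hasPullback k (pullback.fst p p')
  have h₂ := IsPullback.of_hasPullback k' (pullback.snd p p')
  have hM := IsPullback.of_hasPullback (pullback.snd k (pullback.fst p p'))
    (pullback.snd k' (pullback.snd p p'))
  -- the 2×2 grid of pullbacks with corners `M`, `K'`, `K`, `Y` exhibits `M` as `K ×_Y K'`
  have hKK' := ((hM.flip.paste_horiz h₂).paste_vert (h₁.flip.paste_horiz hZ.flip)).flip
  rw [← hkq, ← hkq'] at hKK'
  refine ⟨mono_comp' h.mono_fst_of_mono inferInstance, _, _, _, pullback.fst p p' ≫ p, _,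
    (hk.of_isPullback h₁).inter (hk'.of_isPullback h₂) hM, IsRegularEpi.regularEpi,
    (h.isRegularEpi_lift hKK').regularEpi, ?_⟩
  simp only [Category.assoc, h.lift_fst_assoc, hkq, h₁.w_assoc]

/-- In a pointed regular category, an intersection of two ideals is an ideal:
if `i : I ⟶ Y` and `l : L ⟶ Y` are ideals, then the subobject `I ∩ L → Y`,
obtained as (the diagonal of) the pullback of `i` and `l`, is an ideal. -/
theorem isIdeal_intersection {C : Type u} [Category.{v} C]
    [HasZeroObject C] [HasZeroMorphisms C] [RegularCategory C]
    {I L Y P : C} (i : I ⟶ Y) (l : L ⟶ Y) (a : P ⟶ I) (b : P ⟶ L)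
    (h : IsPullback a b i l) (hi : IsIdeal i) (hl : IsIdeal l) :
    IsIdeal (a ≫ i) :=
  isIdeal_intersection_general i l a b h hi hl
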